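/- Define ξ⊥ := Σₐ ηₐ(ξ)ξₐ, η⊥ := Σₐ ηₐ(ξ)ηₐ, θ := Σₐ ηₐ(ξ)θₐ, and φ⊥ := Σₐ ηₐ(ξ)φₐ (sums over a = 1,2,3). Then: θξ⊥ = -‖ξ⊥‖²ξ, θξ = -ξ⊥, and θ(φξ⊥) = ‖ξ⊥‖²φξ⊥, where ‖ξ⊥‖² = Σₐ ηₐ(ξ)². -/

import Mathlib

open RealInnerProductSpace

/-- Pointwise setup on a real inner product space: an almost contact metric
structure `(φ, ξ, η)` together with an almost contact metric 3-structure
`(φₐ, ξₐ, ηₐ)`, `a ∈ ZMod 3`, satisfying the quaternionic contact relations and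
the compatibility relations coming from `JJₐ = JₐJ`.  Here `η x = ⟪x, ξ⟫` and
`ηₐ x = ⟪x, ξₐ⟫`. -/
structure ContactSetup (V : Type*) [NormedAddCommGroup V] [InnerProductSpace ℝ V] where
  φ : V →ₗ[ℝ] V
  ξ : V
  φa : ZMod 3 → (V →ₗ[ℝ] V)
  ξa : ZMod 3 → V
  φ_sq : ∀ x, φ (φ x) = -x + ⟪x, ξ⟫ • ξ
  ξ_unit : ⟪ξ, ξ⟫ = 1
  φ_ξ : φ ξ = 0
  φ_metric : ∀ x y, ⟪φ x, φ y⟫ = ⟪x, y⟫ - ⟪x, ξ⟫ * ⟪y, ξ⟫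
  φa_sq : ∀ a x, φa a (φa a x) = -x + ⟪x, ξa a⟫ • ξa a
  ξa_unit : ∀ a, ⟪ξa a, ξa a⟫ = 1
  φa_ξa : ∀ a, φa a (ξa a) = 0
  φa_metric : ∀ a x y, ⟪φa a x, φa a y⟫ = ⟪x, y⟫ - ⟪x, ξa a⟫ * ⟪y, ξa a⟫
  quat₁ : ∀ a x, φa a (φa (a + 1) x) - ⟪x, ξa (a + 1)⟫ • ξa a = φa (a + 2) x
  quat₂ : ∀ a x, φa (a + 2) x = -(φa (a + 1) (φa a x)) + ⟪x, ξa a⟫ • ξa (a + 1)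
  quat_ξ₁ : ∀ a, φa a (ξa (a + 1)) = ξa (a + 2)
  quat_ξ₂ : ∀ a, ξa (a + 2) = -(φa (a + 1) (ξa a))
  inter : ∀ a x, φa a (φ x) - ⟪x, ξ⟫ • ξa a = φ (φa a x) - ⟪x, ξa a⟫ • ξ
  inter_ξ : ∀ a, φ (ξa a) = φa a ξ

/-- The local symmetric tensor `θₐ := φₐφ - ξₐ ⊗ η`. -/
def ContactSetup.θa {V : Type*} [NormedAddCommGroup V] [InnerProductSpace ℝ V]
    (S : ContactSetup V) (a : ZMod 3) (x : V) : V :=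
  S.φa a (S.φ x) - ⟪x, S.ξ⟫ • S.ξa a

namespace ContactSetup

variable {V : Type*} [NormedAddCommGroup V] [InnerProductSpace ℝ V] (S : ContactSetup V)

/-- `ξ⊥ := Σₐ ηₐ(ξ) ξₐ`. -/
def ξperp : V := ∑ a : ZMod 3, ⟪S.ξ, S.ξa a⟫ • S.ξa a

/-- `η⊥ := Σₐ ηₐ(ξ) ηₐ`. -/
def ηperp (x : V) : ℝ := ∑ a : ZMod 3, ⟪S.ξ, S.ξa a⟫ * ⟪x, S.ξa a⟫

/-- `θ := Σₐ ηₐ(ξ) θₐ`. -/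
def θ (x : V) : V := ∑ a : ZMod 3, ⟪S.ξ, S.ξa a⟫ • S.θa a x

/-- `φ⊥ := Σₐ ηₐ(ξ) φₐ`. -/
def φperp (x : V) : V := ∑ a : ZMod 3, ⟪S.ξ, S.ξa a⟫ • S.φa a x

/-- `‖ξ⊥‖² = Σₐ ηₐ(ξ)²`. -/
def nsq : ℝ := ∑ a : ZMod 3, ⟪S.ξ, S.ξa a⟫ ^ 2

end ContactSetup



/-! Write `cₐ = ηₐ(ξ)`. Then `θ = φ⊥ ∘ φ - ξ⊥ ⊗ η` and `φ ξ⊥ = φ⊥ ξ`, so everything reduces to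
computing `φ⊥²` and `φ⊥ ξ⊥`. The quaternionic relations say that the `φₐ` satisfy the
Clifford-type relations `φₐφ_b + φ_bφₐ = -2δₐ_b + ξₐ ⊗ η_b + ξ_b ⊗ ηₐ` and `φₐξ_b + φ_bξₐ = 0`;
since the weights `cₐc_b` are symmetric, only these symmetrised combinations enter, giving
`φ⊥² = -‖ξ⊥‖² + ξ⊥ ⊗ η⊥` and `φ⊥ ξ⊥ = 0`. -/

theorem ZMod.three_forall_of_symm {P : ZMod 3 → ZMod 3 → Prop} (symm : ∀ a b, P a b → P b a)
    (diag : ∀ a, P a a) (succ : ∀ a, P a (a + 1)) (a b : ZMod 3) : P a b := by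
  obtain ⟨d, rfl⟩ : ∃ d, b = a + d := ⟨b - a, by ring⟩
  obtain rfl | rfl | rfl : d = 0 ∨ d = 1 ∨ d = 2 := by revert d; decide
  · simpa using diag a
  · exact succ a
  · have h := succ (a + 2)
    rw [add_assoc, show (2 + 1 : ZMod 3) = 0 from rfl, add_zero] at h
    exact symm _ _ h

theorem Finset.two_smul_sum_sum_mul_smul {ι M : Type*} [Fintype ι] [AddCommGroup M] [Module ℝ M]
    (c : ι → ℝ) (f : ι → ι → M) :
    (2 : ℝ) • ∑ a, ∑ b, (c a * c b) • f a b = ∑ a, ∑ b, (c a * c b) • (f a b + f b a) := by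
  simp only [two_smul, smul_add, Finset.sum_add_distrib]
  rw [Finset.sum_comm (f := fun a b => (c a * c b) • f b a)]
  simp only [mul_comm]

namespace ContactSetup

variable {V : Type*} [NormedAddCommGroup V] [InnerProductSpace ℝ V] (S : ContactSetup V)

theorem inner_φ_ξ (x : V) : ⟪S.φ x, S.ξ⟫ = 0 := by
  have h : ⟪S.φ x, S.ξ⟫ • S.ξ = 0 :=
    calc ⟪S.φ x, S.ξ⟫ • S.ξ = S.φ (S.φ (S.φ x)) + S.φ x := by rw [S.φ_sq (S.φ x)]; abel
      _ = 0 := by rw [S.φ_sq x]; simp [S.φ_ξ]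
  have hξ : S.ξ ≠ 0 := fun h0 => by simpa [h0] using S.ξ_unit
  exact (smul_eq_zero.mp h).resolve_right hξ

theorem φa_φa_add_φa_φa (a b : ZMod 3) (x : V) :
    S.φa a (S.φa b x) + S.φa b (S.φa a x) =
      (if a = b then (-2 : ℝ) • x else 0) + ⟪x, S.ξa b⟫ • S.ξa a + ⟪x, S.ξa a⟫ • S.ξa b := by
  revert a b
  refine ZMod.three_forall_of_symm (fun a b h => ?_) (fun a => ?_) (fun a => ?_)
  · simp only [eq_comm (a := b)]
    rw [add_comm, h]
    abel
  · rw [S.φa_sq, if_pos rfl]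
    module
  · rw [if_neg (left_ne_add.mpr (by decide)), eq_add_of_sub_eq (S.quat₁ a x), S.quat₂ a x]
    module

theorem φa_ξa_add_φa_ξa (a b : ZMod 3) : S.φa a (S.ξa b) + S.φa b (S.ξa a) = 0 := by
  revert a b
  refine ZMod.three_forall_of_symm (fun a b h => by rwa [add_comm]) (fun a => by simp [S.φa_ξa])
    (fun a => ?_)
  rw [S.quat_ξ₁, S.quat_ξ₂, neg_add_cancel]

def φperpₗ : V →ₗ[ℝ] V := ∑ a : ZMod 3, ⟪S.ξ, S.ξa a⟫ • S.φa a

theorem φperpₗ_apply (x : V) : S.φperpₗ x = S.φperp x := by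
  simp [φperpₗ, φperp]

theorem θ_apply (x : V) : S.θ x = S.φperp (S.φ x) - ⟪x, S.ξ⟫ • S.ξperp := by
  simp only [θ, θa, φperp, ξperp, smul_sub, Finset.sum_sub_distrib, Finset.smul_sum,
    smul_comm ⟪x, S.ξ⟫]

theorem φ_ξperp : S.φ S.ξperp = S.φperp S.ξ := by
  simp [ξperp, φperp, S.inter_ξ]

theorem inner_ξperp_ξ : ⟪S.ξperp, S.ξ⟫ = S.nsq := by
  rw [real_inner_comm, ξperp, inner_sum]
  simp [real_inner_smul_right, nsq, sq]

theorem ηperp_ξ : S.ηperp S.ξ = S.nsq := by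
  simp [ηperp, nsq, sq]

theorem φperp_φperp (x : V) : S.φperp (S.φperp x) = -(S.nsq • x) + S.ηperp x • S.ξperp := by
  set c : ZMod 3 → ℝ := fun a => ⟪S.ξ, S.ξa a⟫
  have expand : S.φperp (S.φperp x) = ∑ a, ∑ b, (c a * c b) • S.φa a (S.φa b x) := by
    simp only [φperp, map_sum, map_smul, Finset.smul_sum, smul_smul, c]
  have diag :
      ∑ a, ∑ b, (c a * c b) • (if a = b then (-2 : ℝ) • x else 0) = (-2 : ℝ) • S.nsq • x := by
    simp only [smul_ite, smul_zero, Finset.sum_ite_eq, Finset.mem_univ, if_true, smul_smul,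
      nsq, Finset.smul_sum, Finset.sum_smul, c, sq]
    exact Finset.sum_congr rfl fun a _ => by rw [mul_comm]
  have cross : ∑ a, ∑ b, (c a * c b) • (⟪x, S.ξa b⟫ • S.ξa a) = S.ηperp x • S.ξperp := by
    simp only [ηperp, ξperp, Finset.smul_sum, smul_smul, Finset.sum_mul, Finset.sum_smul]
    refine Finset.sum_congr rfl fun a _ => Finset.sum_congr rfl fun b _ => ?_
    simp only [c]
    ring_nf
  have cross_symm : ∑ a, ∑ b, (c a * c b) • (⟪x, S.ξa b⟫ • S.ξa a) +
      ∑ a, ∑ b, (c a * c b) • (⟪x, S.ξa a⟫ • S.ξa b) = (2 : ℝ) • S.ηperp x • S.ξperp := by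
    rw [← cross, Finset.two_smul_sum_sum_mul_smul]
    simp only [smul_add, Finset.sum_add_distrib]
  refine smul_right_injective V (two_ne_zero (α := ℝ)) ?_
  simp only [expand, Finset.two_smul_sum_sum_mul_smul, S.φa_φa_add_φa_φa, add_assoc, smul_add,
    Finset.sum_add_distrib, diag, cross_symm]
  module

theorem φperp_ξperp : S.φperp S.ξperp = 0 := by
  set c : ZMod 3 → ℝ := fun a => ⟪S.ξ, S.ξa a⟫
  have expand : S.φperp S.ξperp = ∑ a, ∑ b, (c a * c b) • S.φa a (S.ξa b) := by
    simp only [φperp, ξperp, map_sum, map_smul, Finset.smul_sum, smul_smul, c]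
  refine smul_right_injective V (two_ne_zero (α := ℝ)) ?_
  simp only [expand, Finset.two_smul_sum_sum_mul_smul, S.φa_ξa_add_φa_ξa, smul_zero,
    Finset.sum_const_zero]

end ContactSetup

theorem theta_global_on_xi_general {V : Type*} [NormedAddCommGroup V] [InnerProductSpace ℝ V]
    (S : ContactSetup V) :
    S.θ S.ξperp = -(S.nsq • S.ξ) ∧
    S.θ S.ξ = -S.ξperp ∧
    S.θ (S.φ S.ξperp) = S.nsq • S.φ S.ξperp := by
  refine ⟨?_, ?_, ?_⟩
  · rw [S.θ_apply, S.inner_ξperp_ξ, S.φ_ξperp, S.φperp_φperp, S.ηperp_ξ]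
    abel
  · rw [S.θ_apply, S.φ_ξ, S.ξ_unit, ← S.φperpₗ_apply, map_zero, one_smul, zero_sub]
  · rw [S.θ_apply, S.inner_φ_ξ, zero_smul, sub_zero, S.φ_sq, S.inner_ξperp_ξ, ← S.φperpₗ_apply,
      map_add, map_neg, map_smul, S.φperpₗ_apply, S.φperpₗ_apply, S.φperp_ξperp, S.φ_ξperp,
      neg_zero, zero_add]

/-- `θ ξ⊥ = -‖ξ⊥‖² ξ`, `θ ξ = -ξ⊥`, and `θ(φ ξ⊥) = ‖ξ⊥‖² φ ξ⊥`. -/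
theorem theta_global_on_xi {V : Type*} [NormedAddCommGroup V] [InnerProductSpace ℝ V]
    (S : ContactSetup V)
    (horth : ∀ a b : ZMod 3, a ≠ b → ⟪S.ξa a, S.ξa b⟫ = 0) :
    S.θ S.ξperp = -(S.nsq • S.ξ) ∧
    S.θ S.ξ = -S.ξperp ∧
    S.θ (S.φ S.ξperp) = S.nsq • S.φ S.ξperp :=
  theta_global_on_xi_general S
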